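/- arXiv:2605.05917 — 3 statements merged into one kernel-verified Lean document; each statement's English description precedes it below -/
import Mathlib

section
/- Let (V, ‖·‖) be a normed real vector space, let u ∈ V with ‖u‖ = 1, let x ∈ V, and let L ≥ 0. Define f : [0,L] → ℝ by f(t) = ‖x − t·u‖. If there exists λ ∈ [0,L] such that λ ≤ ‖x‖ and L − λ ≤ ‖x − L·u‖, then ∫_0^L f(t) dt ≥ (1/4)·L². -/
/-!
Since `t ↦ ‖x - t • u‖` is 1-Lipschitz, the endpoint bounds at `0` and `L` force
`|t - λ| ≤ ‖x - t • u‖` on `[0, L]`; integrating gives `(λ² + (L - λ)²) / 2 ≥ L² / 4`.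
-/

open MeasureTheory intervalIntegral Set

theorem integral_abs_sub_left_of_le {a b : ℝ} (hab : a ≤ b) :
    ∫ t in a..b, |t - a| = (b - a) ^ 2 / 2 := by
  have h := integral_pow_abs_sub_uIoc (a := a) (b := b) 1
  rw [uIoc_of_le hab, ← integral_of_le hab] at h
  simpa only [pow_one, abs_of_nonneg (sub_nonneg.2 hab), Nat.cast_one, one_add_one_eq_two] using h

theorem integral_abs_sub_right_of_le {a b : ℝ} (hab : a ≤ b) :
    ∫ t in a..b, |t - b| = (b - a) ^ 2 / 2 := by
  have h := integral_pow_abs_sub_uIoc (a := b) (b := a) 1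
  rw [uIoc_of_ge hab, ← integral_of_le hab] at h
  simpa only [pow_one, abs_sub_comm a b, abs_of_nonneg (sub_nonneg.2 hab), Nat.cast_one,
    one_add_one_eq_two] using h

theorem integral_abs_sub_of_mem_Icc {a b c : ℝ} (hc : c ∈ Icc a b) :
    ∫ t in a..b, |t - c| = ((c - a) ^ 2 + (b - c) ^ 2) / 2 := by
  have hint : ∀ p q : ℝ, IntervalIntegrable (fun t => |t - c|) volume p q := fun p q =>
    (continuous_id.sub continuous_const).abs.intervalIntegrable p q
  rw [← integral_add_adjacent_intervals (hint a c) (hint c b),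
    integral_abs_sub_right_of_le hc.1, integral_abs_sub_left_of_le hc.2]
  ring

theorem norm_sub_smul_le_norm_sub_smul_add {V : Type*} [SeminormedAddCommGroup V]
    [NormedSpace ℝ V] (x u : V) (s t : ℝ) :
    ‖x - s • u‖ ≤ ‖x - t • u‖ + |s - t| * ‖u‖ := by
  have h := norm_sub_norm_le (x - s • u) (x - t • u)
  rwa [sub_sub_sub_cancel_left, ← sub_smul, norm_smul, Real.norm_eq_abs, abs_sub_comm,
    sub_le_iff_le_add'] at h

theorem abs_sub_le_norm_sub_smul {V : Type*} [SeminormedAddCommGroup V] [NormedSpace ℝ V]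
    {x u : V} (hu : ‖u‖ ≤ 1) {L lam t : ℝ} (ht : t ∈ Icc 0 L) (hstart : lam ≤ ‖x‖)
    (hend : L - lam ≤ ‖x - L • u‖) : |t - lam| ≤ ‖x - t • u‖ := by
  have hleft := norm_sub_smul_le_norm_sub_smul_add x u 0 t
  have hright := norm_sub_smul_le_norm_sub_smul_add x u L t
  rw [zero_smul, sub_zero, zero_sub, abs_neg, abs_of_nonneg ht.1] at hleft
  rw [abs_of_nonneg (sub_nonneg.2 ht.2)] at hright
  have hut : t * ‖u‖ ≤ t := mul_le_of_le_one_right ht.1 hu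
  have huL : (L - t) * ‖u‖ ≤ L - t := mul_le_of_le_one_right (sub_nonneg.2 ht.2) hu
  rw [abs_sub_le_iff]
  constructor <;> linarith

theorem stmt1_general {V : Type*} [NormedAddCommGroup V] [NormedSpace ℝ V]
    (L : ℝ) (u x : V) (hu : ‖u‖ = 1)
    (hsplit : ∃ lam : ℝ, lam ∈ Set.Icc 0 L ∧ lam ≤ ‖x‖ ∧ L - lam ≤ ‖x - L • u‖) :
    (1 / 4) * L ^ 2 ≤ ∫ t in (0 : ℝ)..L, ‖x - t • u‖ := by
  obtain ⟨lam, hlam, hstart, hend⟩ := hsplit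
  calc (1 / 4) * L ^ 2 ≤ (lam ^ 2 + (L - lam) ^ 2) / 2 := by nlinarith [sq_nonneg (2 * lam - L)]
    _ = ∫ t in (0 : ℝ)..L, |t - lam| := by rw [integral_abs_sub_of_mem_Icc hlam]; ring
    _ ≤ ∫ t in (0 : ℝ)..L, ‖x - t • u‖ := by
      refine integral_mono_on (hlam.1.trans hlam.2)
        ((continuous_id.sub continuous_const).abs.intervalIntegrable _ _)
        ((continuous_const.sub (continuous_id.smul continuous_const)).norm.intervalIntegrable _ _)
        fun t ht => abs_sub_le_norm_sub_smul hu.le ht hstart hend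

/-- Key integral lower bound: if there is a splitting point `λ ∈ [0, L]` with
`λ ≤ ‖x‖` and `L - λ ≤ ‖x - L • u‖`, then `∫_0^L ‖x - t • u‖ dt ≥ L² / 4`. -/
theorem stmt1 {V : Type*} [NormedAddCommGroup V] [NormedSpace ℝ V]
    (L : ℝ) (hL : 0 ≤ L) (u x : V) (hu : ‖u‖ = 1)
    (hsplit : ∃ lam : ℝ, lam ∈ Set.Icc 0 L ∧ lam ≤ ‖x‖ ∧ L - lam ≤ ‖x - L • u‖) :
    (1 / 4) * L ^ 2 ≤ ∫ t in (0 : ℝ)..L, ‖x - t • u‖ :=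
  stmt1_general L u x hu hsplit
end

section
/- Let (V, ‖·‖) be a normed real vector space. Let p : [x₁, y₁] → V and q : [x₂, y₂] → V be unit-speed parametrisations of line segments. With cost(γ_xy) and cost(γ_yx) defined as the integrals of distances along the two L-shaped matchings (vertical-then-horizontal and horizontal-then-vertical respectively), it holds that cost(γ_yx) ≤ 5 · cost(γ_xy). -/
/-!
Both costs are compared through the distance integrals of one segment to a fixed point. Moving
that point by `δ` changes `∫ ‖p s - z‖` by at most `(segment length) · δ`, so
`cost(γ_yx) ≤ cost(γ_xy) + 2 Lp Lq ≤ cost(γ_xy) + Lp² + Lq²`. Conversely, since a unit-speed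
segment is an isometric image of an interval, the reverse triangle inequality gives
`‖p s - z‖ ≥ |s - c|` for a constant `c`, and `∫ s in a..b, |s - c| ≥ (b - a)² / 4` (the minimum
is at the midpoint), so `cost(γ_xy) ≥ (Lp² + Lq²) / 4`.
-/

open MeasureTheory intervalIntegral

lemma sq_div_four_le_integral_abs_sub {a b : ℝ} (hab : a ≤ b) (c : ℝ) :
    (b - a) ^ 2 / 4 ≤ ∫ s in a..b, |s - c| := by
  set m := (a + b) / 2 with hm
  have hint : ∀ x y : ℝ, IntervalIntegrable (fun s => |s - c|) volume x y :=
    fun x y => (continuous_id.sub continuous_const).abs.intervalIntegrable x y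
  have left : ∫ s in a..m, (c - s) ≤ ∫ s in a..m, |s - c| :=
    integral_mono_on (by linarith) (intervalIntegrable_const.sub intervalIntegrable_id)
      (hint a m) fun s _ => by rw [abs_sub_comm]; exact le_abs_self _
  have right : ∫ s in m..b, (s - c) ≤ ∫ s in m..b, |s - c| :=
    integral_mono_on (by linarith) (intervalIntegrable_id.sub intervalIntegrable_const)
      (hint m b) fun s _ => le_abs_self _
  rw [integral_sub intervalIntegrable_const intervalIntegrable_id,
    intervalIntegral.integral_const, integral_id, smul_eq_mul] at left
  rw [integral_sub intervalIntegrable_id intervalIntegrable_const,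
    intervalIntegral.integral_const, integral_id, smul_eq_mul] at right
  have hsum : (m - a) * c - (m ^ 2 - a ^ 2) / 2 + ((b ^ 2 - m ^ 2) / 2 - (b - m) * c) =
      (b - a) ^ 2 / 4 := by
    rw [hm]; ring
  rw [← integral_add_adjacent_intervals (hint a m) (hint m b)]
  linarith

section PseudoMetricSpace

variable {X : Type*} [PseudoMetricSpace X]

lemma integral_dist_le_integral_dist_add {f : ℝ → X} (hf : Continuous f) {a b : ℝ}
    (hab : a ≤ b) (z w : X) :
    ∫ s in a..b, dist (f s) z ≤ (∫ s in a..b, dist (f s) w) + (b - a) * dist w z := by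
  have hw : IntervalIntegrable (fun s => dist (f s) w) volume a b :=
    (hf.dist continuous_const).intervalIntegrable a b
  calc ∫ s in a..b, dist (f s) z ≤ ∫ s in a..b, (dist (f s) w + dist w z) :=
        integral_mono_on hab ((hf.dist continuous_const).intervalIntegrable a b)
          (hw.add intervalIntegrable_const) fun s _ => dist_triangle _ _ _
    _ = (∫ s in a..b, dist (f s) w) + (b - a) * dist w z := by
        rw [integral_add hw intervalIntegrable_const, intervalIntegral.integral_const,
          smul_eq_mul]

lemma sq_div_four_le_integral_dist {p : ℝ → X} (hp : Isometry p) {a b : ℝ} (hab : a ≤ b)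
    (z : X) :
    (b - a) ^ 2 / 4 ≤ ∫ s in a..b, dist (p s) z := by
  calc (b - a) ^ 2 / 4 ≤ ∫ s in a..b, |s - (a + dist z (p a))| :=
        sq_div_four_le_integral_abs_sub hab _
    _ ≤ ∫ s in a..b, dist (p s) z := by
        refine integral_mono_on hab
          ((continuous_id.sub continuous_const).abs.intervalIntegrable a b)
          ((hp.continuous.dist continuous_const).intervalIntegrable a b) fun s hs => ?_
        have hdist : dist (p s) (p a) = s - a := by
          rw [hp.dist_eq, Real.dist_eq, abs_of_nonneg (by linarith [hs.1])]
        calc |s - (a + dist z (p a))| = |dist (p s) (p a) - dist z (p a)| := by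
              rw [hdist, sub_sub]
          _ ≤ dist (p s) z := abs_dist_sub_le _ _ _

end PseudoMetricSpace

lemma isometry_of_eq_add_smul {V : Type*} [NormedAddCommGroup V] [NormedSpace ℝ V]
    {p : ℝ → V} {p₀ u : V} {a : ℝ} (hu : ‖u‖ = 1) (hp : ∀ s, p s = p₀ + (s - a) • u) :
    Isometry p :=
  Isometry.of_dist_eq fun s t => by
    rw [hp, hp, dist_eq_norm, add_sub_add_left_eq_sub, ← sub_smul, sub_sub_sub_cancel_right,
      norm_smul, hu, mul_one, Real.norm_eq_abs, Real.dist_eq]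

/-- The factor-5 approximation lemma: `cost(γ_yx) ≤ 5 · cost(γ_xy)` for the two
L-shaped matchings of two line segments in a normed real vector space. -/
theorem stmt5 {V : Type*} [NormedAddCommGroup V] [NormedSpace ℝ V]
    (x₁ y₁ x₂ y₂ : ℝ) (hx : x₁ ≤ y₁) (hy : x₂ ≤ y₂)
    (px qx u v : V) (hu : ‖u‖ = 1) (hv : ‖v‖ = 1)
    (p : ℝ → V) (q : ℝ → V)
    (hp : ∀ s, p s = px + (s - x₁) • u) (hq : ∀ t, q t = qx + (t - x₂) • v) :
    (∫ s in x₁..y₁, ‖p s - q x₂‖) + (∫ t in x₂..y₂, ‖p y₁ - q t‖) ≤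
      5 * ((∫ t in x₂..y₂, ‖p x₁ - q t‖) + ∫ s in x₁..y₁, ‖p s - q y₂‖) := by
  have hpi : Isometry p := isometry_of_eq_add_smul hu hp
  have hqi : Isometry q := isometry_of_eq_add_smul hv hq
  simp only [← dist_eq_norm, dist_comm (p y₁), dist_comm (p x₁)]
  have up₁ := integral_dist_le_integral_dist_add hpi.continuous hx (q x₂) (q y₂)
  have up₂ := integral_dist_le_integral_dist_add hqi.continuous hy (p y₁) (p x₁)
  have low₁ := sq_div_four_le_integral_dist hpi hx (q y₂)
  have low₂ := sq_div_four_le_integral_dist hqi hy (p x₁)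
  rw [hqi.dist_eq, Real.dist_eq, abs_of_nonneg (by linarith)] at up₁
  rw [dist_comm, hpi.dist_eq, Real.dist_eq, abs_of_nonneg (by linarith)] at up₂
  linarith [sq_nonneg ((y₁ - x₁) - (y₂ - x₂))]
end

section
/- Let v, w ∈ ℝ² be linearly independent, i.e. v₁w₂ − w₁v₂ ≠ 0, and let Δ := {λv + μw : λ, μ ≥ 0} be the cone they span. Suppose K ⊆ ℝ² is a balanced convex polygon having v and w as adjacent vertices (so the segment from v to w lies on the boundary of K). Then for every z ∈ Δ, the gauge satisfies G_K(z) = ((w₂ − v₂)·z₁ + (v₁ − w₁)·z₂) / (v₁w₂ − w₁v₂). In particular, G_K is linear on the cone Δ. -/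
/-!
A balanced convex set containing two linearly independent vectors is a neighbourhood of `0`,
so its gauge equals `1` exactly on its frontier. A point `l • v + m • w` of the cone is
`(l + m)` times a point of the segment `[v, w] ⊆ frontier K`, so by positive homogeneity its
gauge is `l + m`, which is the given linear formula written in Cramer coordinates.
-/

open Pointwise

/-- The gauge (Minkowski functional) of a set in the plane. -/
noncomputable def gaugeFn (K : Set (ℝ × ℝ)) (z : ℝ × ℝ) : ℝ :=
  sInf {l : ℝ | 0 ≤ l ∧ z ∈ l • K}

open Filter Topology

-- At `z = 0` both sides vanish, also for `K = ∅` since `sInf ∅ = 0`.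
theorem gaugeFn_eq_gauge (K : Set (ℝ × ℝ)) : gaugeFn K = gauge K := by
  funext z
  rcases eq_or_ne z 0 with rfl | hz
  · rw [gauge_zero]
    rcases K.eq_empty_or_nonempty with rfl | hK
    · simp [gaugeFn]
    refine le_antisymm (csInf_le ⟨0, fun _ hl ↦ hl.1⟩ ⟨le_rfl, ?_⟩) ?_
    · rw [Set.zero_smul_set hK]
      rfl
    · exact Real.sInf_nonneg fun _ hl ↦ hl.1
  · rw [gaugeFn, gauge_def]
    congr 1
    ext l
    refine ⟨fun ⟨hl, hzl⟩ ↦ ⟨lt_of_le_of_ne hl ?_, hzl⟩, fun ⟨hl, hzl⟩ ↦ ⟨hl.le, hzl⟩⟩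
    rintro rfl
    obtain ⟨k, -, rfl⟩ := hzl
    exact hz (zero_smul ℝ k)

section Gauge

variable {E : Type*} [AddCommGroup E] [Module ℝ E] [TopologicalSpace E]
  [IsTopologicalAddGroup E] [ContinuousSMul ℝ E] {s : Set E} {v w : E}

theorem gauge_smul_add_smul_of_segment_subset_frontier (hc : Convex ℝ s) (hs₀ : s ∈ 𝓝 0)
    (hvw : segment ℝ v w ⊆ frontier s) {l m : ℝ} (hl : 0 ≤ l) (hm : 0 ≤ m) :
    gauge s (l • v + m • w) = l + m := by
  rcases (add_nonneg hl hm).eq_or_lt with hlm | hlm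
  · obtain ⟨rfl, rfl⟩ : l = 0 ∧ m = 0 := ⟨by linarith, by linarith⟩
    simp
  have hp : (l / (l + m)) • v + (m / (l + m)) • w ∈ segment ℝ v w :=
    ⟨_, _, by positivity, by positivity, by field_simp, rfl⟩
  have hlv_mw : l • v + m • w = (l + m) • ((l / (l + m)) • v + (m / (l + m)) • w) := by
    rw [smul_add, smul_smul, smul_smul, mul_div_cancel₀ _ hlm.ne', mul_div_cancel₀ _ hlm.ne']
  rw [hlv_mw, gauge_smul_of_nonneg hlm.le, (gauge_eq_one_iff_mem_frontier hc hs₀).2 (hvw hp),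
    smul_eq_mul, mul_one]

end Gauge

theorem Convex.smul_add_smul_mem_of_balanced {E : Type*} [AddCommGroup E] [Module ℝ E]
    {s : Set E} (hc : Convex ℝ s) (hbal : Balanced ℝ s) {x y : E} (hx : x ∈ s) (hy : y ∈ s)
    {a b : ℝ} (ha : |a| ≤ 1 / 2) (hb : |b| ≤ 1 / 2) : a • x + b • y ∈ s := by
  have h2a : ‖2 * a‖ ≤ 1 := by rw [Real.norm_eq_abs, abs_mul, abs_two]; linarith
  have h2b : ‖2 * b‖ ≤ 1 := by rw [Real.norm_eq_abs, abs_mul, abs_two]; linarith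
  have := hc (hbal.smul_mem h2a hx) (hbal.smul_mem h2b hy) (by norm_num : (0 : ℝ) ≤ 1 / 2)
    (by norm_num : (0 : ℝ) ≤ 1 / 2) (by norm_num)
  have half_mul_two_mul (c : ℝ) : 1 / 2 * (2 * c) = c := by ring
  rwa [smul_smul, smul_smul, half_mul_two_mul, half_mul_two_mul] at this

section Plane

variable {v w : ℝ × ℝ}

theorem cramer_smul_add_smul (hind : v.1 * w.2 - w.1 * v.2 ≠ 0) (z : ℝ × ℝ) :
    ((z.1 * w.2 - w.1 * z.2) / (v.1 * w.2 - w.1 * v.2)) • v +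
      ((v.1 * z.2 - z.1 * v.2) / (v.1 * w.2 - w.1 * v.2)) • w = z := by
  ext <;> simp only [Prod.fst_add, Prod.snd_add, Prod.smul_fst, Prod.smul_snd, smul_eq_mul] <;>
    rw [div_mul_eq_mul_div, div_mul_eq_mul_div, ← add_div, div_eq_iff hind] <;> ring

theorem Convex.mem_nhds_zero_of_balanced (hind : v.1 * w.2 - w.1 * v.2 ≠ 0)
    {K : Set (ℝ × ℝ)} (hc : Convex ℝ K) (hb : Balanced ℝ K) (hv : v ∈ K) (hw : w ∈ K) :
    K ∈ 𝓝 0 := by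
  set A : ℝ × ℝ → ℝ := fun z ↦ (z.1 * w.2 - w.1 * z.2) / (v.1 * w.2 - w.1 * v.2)
  set B : ℝ × ℝ → ℝ := fun z ↦ (v.1 * z.2 - z.1 * v.2) / (v.1 * w.2 - w.1 * v.2)
  have hA : Tendsto A (𝓝 0) (𝓝 0) := by
    simpa [A] using (show Continuous A by fun_prop).tendsto 0
  have hB : Tendsto B (𝓝 0) (𝓝 0) := by
    simpa [B] using (show Continuous B by fun_prop).tendsto 0
  have half : Metric.closedBall (0 : ℝ) (1 / 2) ∈ 𝓝 0 := Metric.closedBall_mem_nhds 0 (by norm_num)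
  filter_upwards [hA half, hB half] with z hzA hzB
  rw [← cramer_smul_add_smul hind z]
  simp only [Set.mem_preimage, Metric.mem_closedBall, dist_zero_right, Real.norm_eq_abs] at hzA hzB
  exact hc.smul_add_smul_mem_of_balanced hb hv hw hzA hzB

end Plane

theorem stmt12_general (v w : ℝ × ℝ) (hind : v.1 * w.2 - w.1 * v.2 ≠ 0)
    (K : Set (ℝ × ℝ))
    (hbal : ∀ l : ℝ, l ∈ Set.Icc (-1 : ℝ) 1 → l • K ⊆ K)
    (hconv : Convex ℝ K)
    (hv : v ∈ K) (hw : w ∈ K)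
    (hbdry : segment ℝ v w ⊆ frontier K) :
    ∀ z ∈ {z : ℝ × ℝ | ∃ l m : ℝ, 0 ≤ l ∧ 0 ≤ m ∧ z = l • v + m • w},
      gaugeFn K z = ((w.2 - v.2) * z.1 + (v.1 - w.1) * z.2) /
        (v.1 * w.2 - w.1 * v.2) := by
  rintro _ ⟨l, m, hl, hm, rfl⟩
  have hbalanced : Balanced ℝ K := fun a ha ↦
    hbal a (abs_le.1 (by rwa [← Real.norm_eq_abs]))
  have hK₀ : K ∈ 𝓝 0 := hconv.mem_nhds_zero_of_balanced hind hbalanced hv hw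
  rw [gaugeFn_eq_gauge, gauge_smul_add_smul_of_segment_subset_frontier hconv hK₀ hbdry hl hm,
    eq_div_iff hind]
  simp only [Prod.fst_add, Prod.snd_add, Prod.smul_fst, Prod.smul_snd, smul_eq_mul]
  ring

/-- On the cone spanned by two adjacent vertices `v, w` of a balanced convex
polygon `K` (the segment from `v` to `w` lies on the boundary of `K`), the
gauge is given by the linear formula
`G_K(z) = ((w₂ - v₂) z₁ + (v₁ - w₁) z₂)/(v₁ w₂ - w₁ v₂)`. -/
theorem stmt12 (v w : ℝ × ℝ) (hind : v.1 * w.2 - w.1 * v.2 ≠ 0)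
    (K : Set (ℝ × ℝ))
    (hbal : ∀ l : ℝ, l ∈ Set.Icc (-1 : ℝ) 1 → l • K ⊆ K)
    (hconv : Convex ℝ K)
    (hbdd : Bornology.IsBounded K)
    (hcl : IsClosed K)
    (hv : v ∈ K) (hw : w ∈ K)
    (hbdry : segment ℝ v w ⊆ frontier K) :
    ∀ z ∈ {z : ℝ × ℝ | ∃ l m : ℝ, 0 ≤ l ∧ 0 ≤ m ∧ z = l • v + m • w},
      gaugeFn K z = ((w.2 - v.2) * z.1 + (v.1 - w.1) * z.2) /
        (v.1 * w.2 - w.1 * v.2) :=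
  stmt12_general v w hind K hbal hconv hv hw hbdry
end
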